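/- Let sigma' be the 16x16 matrix obtained from sigma by replacing q by q^-1, p by p^-1 and Y by -q^-1 Y throughout (note that (-q^-1 Y)^2 = p^2 - q^-2 + p^-2 q^-2 - 1, as required for the defining relation in the new parameters). Let P be the 16x16 matrix over R with entries P[(i,j),(k,l)] = (-1)^([k][l]) if i = l and j = k, and 0 otherwise, where the grading is [1] = [4] = 0 and [2] = [3] = 1. Then sigmabar = P sigma' P; that is, the inverse braiding at (q,p) is conjugate by the graded permutation matrix to the braiding at (q^-1, p^-1). -/

import Mathlib

open Matrix Kronecker

/-- The elementary 16×16 matrix with entry `v` in row `(a,b)` and column `(c,d)`,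
rows and columns indexed by `Fin 4 × Fin 4` (Kronecker product convention;
the index `i ∈ {1,…,4}` of the paper corresponds to `i - 1 ∈ Fin 4`). -/
def lgE {R : Type*} [CommRing R] (a b c d : Fin 4) (v : R) :
    Matrix (Fin 4 × Fin 4) (Fin 4 × Fin 4) R :=
  Matrix.single (a, b) (c, d) v

/-- The Links–Gould braiding `σ`, where `qi, pi` denote the inverses of `q, p`
and `Y ^ 2 = p⁻² - q² + p²q² - 1`. -/
def LGsigma {R : Type*} [CommRing R] (q p qi pi Y : R) :
    Matrix (Fin 4 × Fin 4) (Fin 4 × Fin 4) R :=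
  lgE 0 0 0 0 (pi ^ 2)
    + lgE 0 1 1 0 pi + lgE 1 0 0 1 pi + lgE 0 2 2 0 pi + lgE 2 0 0 2 pi
    + lgE 0 3 3 0 1 + lgE 3 0 0 3 1
    + lgE 1 0 1 0 (pi ^ 2 - 1) + lgE 2 0 2 0 (pi ^ 2 - 1)
    + lgE 1 1 1 1 (-1) + lgE 2 2 2 2 (-1)
    + lgE 1 2 1 2 (q ^ 2 - 1)
    + lgE 1 2 2 1 (-q) + lgE 2 1 1 2 (-q)
    + lgE 1 2 3 0 (-(q * Y)) + lgE 3 0 1 2 (-(q * Y))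
    + lgE 2 1 3 0 Y + lgE 3 0 2 1 Y
    + lgE 3 0 3 0 (Y ^ 2)
    + lgE 1 3 3 1 (p * q) + lgE 3 1 1 3 (p * q)
    + lgE 2 3 3 2 (p * q) + lgE 3 2 2 3 (p * q)
    + lgE 3 1 3 1 (p ^ 2 * q ^ 2 - 1) + lgE 3 2 3 2 (p ^ 2 * q ^ 2 - 1)
    + lgE 3 3 3 3 (p ^ 2 * q ^ 2)

/-- The matrix `σ̄` (the inverse braiding). -/
def LGsigmabar {R : Type*} [CommRing R] (q p qi pi Y : R) :
    Matrix (Fin 4 × Fin 4) (Fin 4 × Fin 4) R :=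
  lgE 0 0 0 0 (p ^ 2)
    + lgE 0 1 0 1 (p ^ 2 - 1) + lgE 0 2 0 2 (p ^ 2 - 1)
    + lgE 0 1 1 0 p + lgE 1 0 0 1 p + lgE 0 2 2 0 p + lgE 2 0 0 2 p
    + lgE 0 3 0 3 (Y ^ 2 * qi ^ 2)
    + lgE 0 3 1 2 (Y * qi) + lgE 1 2 0 3 (Y * qi)
    + lgE 0 3 2 1 (-(Y * qi ^ 2)) + lgE 2 1 0 3 (-(Y * qi ^ 2))
    + lgE 0 3 3 0 1 + lgE 3 0 0 3 1
    + lgE 1 1 1 1 (-1) + lgE 2 2 2 2 (-1)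
    + lgE 1 2 2 1 (-qi) + lgE 2 1 1 2 (-qi)
    + lgE 2 1 2 1 (qi ^ 2 - 1)
    + lgE 1 3 1 3 (pi ^ 2 * qi ^ 2 - 1) + lgE 2 3 2 3 (pi ^ 2 * qi ^ 2 - 1)
    + lgE 1 3 3 1 (pi * qi) + lgE 3 1 1 3 (pi * qi)
    + lgE 2 3 3 2 (pi * qi) + lgE 3 2 2 3 (pi * qi)
    + lgE 3 3 3 3 (pi ^ 2 * qi ^ 2)

/-- The diagonal matrix `D = diag(p², -p²q², -p², p²q²)`, as a function on `Fin 4`. -/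
def LGD {R : Type*} [CommRing R] (q p : R) : Fin 4 → R :=
  ![p ^ 2, -(p ^ 2 * q ^ 2), -(p ^ 2), p ^ 2 * q ^ 2]

/-- Quantum closure of the second strand of a two-strand tensor. -/
def lgcl2 {R : Type*} [CommRing R] (D : Fin 4 → R)
    (M : Matrix (Fin 4 × Fin 4) (Fin 4 × Fin 4) R) : Matrix (Fin 4) (Fin 4) R :=
  Matrix.of fun y x => ∑ a : Fin 4, M (y, a) (x, a) * D a

/-- Quantum closure of the second and third strands of a three-strand tensor. -/
def lgcl3 {R : Type*} [CommRing R] (D : Fin 4 → R)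
    (M : Matrix (Fin 4 × Fin 4 × Fin 4) (Fin 4 × Fin 4 × Fin 4) R) :
    Matrix (Fin 4) (Fin 4) R :=
  Matrix.of fun y x => ∑ a : Fin 4, ∑ b : Fin 4, M (y, a, b) (x, a, b) * D a * D b

/-- Quantum closure of the second, third and fourth strands of a four-strand tensor. -/
def lgcl4 {R : Type*} [CommRing R] (D : Fin 4 → R)
    (M : Matrix (Fin 4 × Fin 4 × Fin 4 × Fin 4) (Fin 4 × Fin 4 × Fin 4 × Fin 4) R) :
    Matrix (Fin 4) (Fin 4) R :=
  Matrix.of fun y x =>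
    ∑ a : Fin 4, ∑ b : Fin 4, ∑ c : Fin 4, M (y, a, b, c) (x, a, b, c) * D a * D b * D c

/-- `S ⊗ I₄` acting on the first two of three strands (Kronecker product,
reindexed along the canonical associativity equivalence). -/
def lgB1 {R : Type*} [CommRing R] (S : Matrix (Fin 4 × Fin 4) (Fin 4 × Fin 4) R) :
    Matrix (Fin 4 × Fin 4 × Fin 4) (Fin 4 × Fin 4 × Fin 4) R :=
  Matrix.reindex (Equiv.prodAssoc (Fin 4) (Fin 4) (Fin 4))
    (Equiv.prodAssoc (Fin 4) (Fin 4) (Fin 4)) (S ⊗ₖ (1 : Matrix (Fin 4) (Fin 4) R))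

/-- `I₄ ⊗ S` acting on the last two of three strands. -/
def lgB2 {R : Type*} [CommRing R] (S : Matrix (Fin 4 × Fin 4) (Fin 4 × Fin 4) R) :
    Matrix (Fin 4 × Fin 4 × Fin 4) (Fin 4 × Fin 4 × Fin 4) R :=
  (1 : Matrix (Fin 4) (Fin 4) R) ⊗ₖ S

/-- `S ⊗ I₁₆` acting on the first two of four strands. -/
def lgC1 {R : Type*} [CommRing R] (S : Matrix (Fin 4 × Fin 4) (Fin 4 × Fin 4) R) :
    Matrix (Fin 4 × Fin 4 × Fin 4 × Fin 4) (Fin 4 × Fin 4 × Fin 4 × Fin 4) R :=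
  Matrix.reindex (Equiv.prodAssoc (Fin 4) (Fin 4) (Fin 4 × Fin 4))
    (Equiv.prodAssoc (Fin 4) (Fin 4) (Fin 4 × Fin 4))
    (S ⊗ₖ (1 : Matrix (Fin 4 × Fin 4) (Fin 4 × Fin 4) R))

/-- `I₄ ⊗ S ⊗ I₄` acting on the middle two of four strands. -/
def lgC2 {R : Type*} [CommRing R] (S : Matrix (Fin 4 × Fin 4) (Fin 4 × Fin 4) R) :
    Matrix (Fin 4 × Fin 4 × Fin 4 × Fin 4) (Fin 4 × Fin 4 × Fin 4 × Fin 4) R :=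
  (1 : Matrix (Fin 4) (Fin 4) R) ⊗ₖ lgB1 S

/-- `I₁₆ ⊗ S` acting on the last two of four strands. -/
def lgC3 {R : Type*} [CommRing R] (S : Matrix (Fin 4 × Fin 4) (Fin 4 × Fin 4) R) :
    Matrix (Fin 4 × Fin 4 × Fin 4 × Fin 4) (Fin 4 × Fin 4 × Fin 4 × Fin 4) R :=
  (1 : Matrix (Fin 4) (Fin 4) R) ⊗ₖ lgB2 S

/-- The `ℤ₂` grading `[1] = [4] = 0`, `[2] = [3] = 1` on the four basis states
(0-indexed). -/
def lgGrading : Fin 4 → ℕ := ![0, 1, 1, 0]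

/-- The graded permutation matrix `P` with `P[(i,j),(k,l)] = (-1)^([k][l])` if
`i = l` and `j = k`, and `0` otherwise. -/
def lgP (R : Type*) [CommRing R] : Matrix (Fin 4 × Fin 4) (Fin 4 × Fin 4) R :=
  Matrix.of fun ij kl =>
    if ij.1 = kl.2 ∧ ij.2 = kl.1 then (-1 : R) ^ (lgGrading kl.1 * lgGrading kl.2) else 0

/-! Conjugation by the super flip `x ⊗ y ↦ (-1)^(|x||y|) y ⊗ x` sends the matrix unit at
`((a,b),(c,d))` to the one at `((b,a),(d,c))`, multiplied by the Koszul sign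
`(-1)^([a][b] + [c][d])`. Applied to the 25 matrix units making up `σ'`, this turns `σ'` into `σ̄`
term by term, the coefficients agreeing as polynomial identities in `q, p, qi, pi, Y`. -/

namespace Matrix

variable {ι : Type*} [DecidableEq ι] (R : Type*) [CommRing R]

def gradedSwap (g : ι → ℕ) : Matrix (ι × ι) (ι × ι) R :=
  of fun ij kl => if ij.1 = kl.2 ∧ ij.2 = kl.1 then (-1 : R) ^ (g kl.1 * g kl.2) else 0

variable [Fintype ι] {R}

theorem gradedSwap_mul_apply (g : ι → ℕ) (M : Matrix (ι × ι) (ι × ι) R) (i j : ι)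
    (kl : ι × ι) : (gradedSwap R g * M) (i, j) kl = (-1 : R) ^ (g j * g i) * M (j, i) kl := by
  simp [mul_apply, gradedSwap, Fintype.sum_prod_type, ite_and, ite_mul]

theorem mul_gradedSwap_apply (g : ι → ℕ) (M : Matrix (ι × ι) (ι × ι) R) (ij : ι × ι)
    (k l : ι) : (M * gradedSwap R g) ij (k, l) = M ij (l, k) * (-1 : R) ^ (g k * g l) := by
  simp [mul_apply, gradedSwap, Fintype.sum_prod_type, ite_and, mul_ite, eq_comm]

theorem gradedSwap_mul_mul_gradedSwap_apply (g : ι → ℕ) (M : Matrix (ι × ι) (ι × ι) R)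
    (i j k l : ι) :
    (gradedSwap R g * M * gradedSwap R g) (i, j) (k, l)
      = (-1 : R) ^ (g i * g j + g k * g l) * M (j, i) (l, k) := by
  rw [mul_gradedSwap_apply, gradedSwap_mul_apply, pow_add, mul_comm (g j)]
  ring

theorem gradedSwap_mul_single_mul_gradedSwap (g : ι → ℕ) (a b c d : ι) (v : R) :
    gradedSwap R g * single (a, b) (c, d) v * gradedSwap R g
      = single (b, a) (d, c) ((-1 : R) ^ (g a * g b + g c * g d) * v) := by
  ext ⟨i, j⟩ ⟨k, l⟩
  rw [gradedSwap_mul_mul_gradedSwap_apply]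
  by_cases h : b = i ∧ a = j ∧ d = k ∧ c = l
  · obtain ⟨rfl, rfl, rfl, rfl⟩ := h
    simp [mul_comm (g b), mul_comm (g d)]
  · simp only [single_apply, Prod.mk.injEq]
    rw [if_neg (by tauto), if_neg (by tauto), mul_zero]

end Matrix

section LinksGould

variable {R : Type*} [CommRing R]

theorem lgP_eq_gradedSwap : lgP R = Matrix.gradedSwap R lgGrading :=
  rfl

theorem lgE_eq_smul_single_one (a b c d : Fin 4) (v : R) :
    lgE a b c d v = v • Matrix.single (a, b) (c, d) 1 := by
  rw [lgE, Matrix.smul_single, smul_eq_mul, mul_one]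

theorem lgP_mul_lgE_mul_lgP (a b c d : Fin 4) (v : R) :
    lgP R * lgE a b c d v * lgP R
      = lgE b a d c ((-1 : R) ^ (lgGrading a * lgGrading b + lgGrading c * lgGrading d) * v) := by
  rw [lgP_eq_gradedSwap, lgE, lgE, Matrix.gradedSwap_mul_single_mul_gradedSwap]

end LinksGould

theorem LG_sigmabar_eq_P_sigma_inv_P_general (R : Type*) [CommRing R] (q p qi pi Y : R) :
    LGsigmabar q p qi pi Y = lgP R * LGsigma qi pi q p (-(qi * Y)) * lgP R := by
  simp only [LGsigma, LGsigmabar, Matrix.add_mul, Matrix.mul_add, lgP_mul_lgE_mul_lgP]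
  simp only [lgGrading, Matrix.cons_val, mul_zero, mul_one, add_zero, zero_add, pow_zero,
    pow_one, one_mul, neg_one_mul, lgE_eq_smul_single_one]
  module

/-- `σ̄ = P σ' P`, where `σ'` is `σ` with `q ↦ q⁻¹`, `p ↦ p⁻¹`,
`Y ↦ -q⁻¹Y`: the inverse braiding at `(q,p)` is conjugate by the graded
permutation matrix to the braiding at `(q⁻¹, p⁻¹)`. -/
theorem LG_sigmabar_eq_P_sigma_inv_P (R : Type*) [CommRing R] (q p qi pi Y : R)
    (hq : q * qi = 1) (hp : p * pi = 1)
    (hY : Y ^ 2 = pi ^ 2 - q ^ 2 + p ^ 2 * q ^ 2 - 1) :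
    LGsigmabar q p qi pi Y = lgP R * LGsigma qi pi q p (-(qi * Y)) * lgP R :=
  LG_sigmabar_eq_P_sigma_inv_P_general R q p qi pi Y
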